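/- Suppose [n]! ≠ 0 in k. Then the set of vectors ⋃_α {F^a Ω(α) : 0 ≤ a ≤ i_α}, where the union is over all 1-factors α of length n, is a k-basis of V^{⊗n}, and its elements are pairwise orthogonal with respect to the bilinear form ⟨−,−⟩. -/

import Mathlib

noncomputable section
attribute [local instance] Classical.propDecidable

/-- Balanced quantum integer `[m]` for a natural number `m`. -/
def qintN {k : Type*} [Field k] (v : k) (m : ℕ) : k :=
  ∑ t ∈ Finset.range m, v ^ ((m : ℤ) - 1 - 2 * t)

/-- Balanced quantum integer `[m]` for an integer `m`. -/
def qint {k : Type*} [Field k] (v : k) (m : ℤ) : k :=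
  if 0 ≤ m then qintN v m.toNat else - qintN v (-m).toNat

/-- Quantum factorial `[m]! = [1][2]⋯[m]`. -/
def qfact {k : Type*} [Field k] (v : k) (m : ℕ) : k :=
  ∏ j ∈ Finset.range m, qintN v (j + 1)

/-- The `n`-th tensor power of `V = k²`, realized as coordinate functions with
respect to the basis `y_i`, `i ∈ {1,-1}ⁿ` (here `true ↔ 1`, `false ↔ -1`). -/
abbrev Tn (k : Type*) [Field k] (n : ℕ) := (Fin n → Bool) → k

/-- The sign of an index entry: `true ↦ 1`, `false ↦ -1`. -/
def sgn (b : Bool) : ℤ := if b then 1 else -1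

/-- The weight `i₁ + ⋯ + i_n` of a basis index. -/
def wt {n : ℕ} (i : Fin n → Bool) : ℤ := ∑ t, sgn (i t)

variable {k : Type*} [Field k]

/-- The operator `E` on `V^{⊗n}`. -/
def Eop (v : k) (n : ℕ) : Tn k n →ₗ[k] Tn k n where
  toFun f := fun i =>
    ∑ j ∈ Finset.univ.filter (fun j => i j = true),
      v ^ (∑ t ∈ Finset.univ.filter (fun t => t < j), sgn (i t)) * f (Function.update i j false)
  map_add' f g := by
    funext i
    simp [Pi.add_apply, mul_add, Finset.sum_add_distrib]
  map_smul' c f := by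
    funext i
    simp only [Pi.smul_apply, smul_eq_mul, RingHom.id_apply]
    rw [Finset.mul_sum]
    exact Finset.sum_congr rfl fun j _ => by ring

/-- The operator `F` on `V^{⊗n}`. -/
def Fop (v : k) (n : ℕ) : Tn k n →ₗ[k] Tn k n where
  toFun f := fun i =>
    ∑ j ∈ Finset.univ.filter (fun j => i j = false),
      v ^ (-(∑ t ∈ Finset.univ.filter (fun t => j < t), sgn (i t))) * f (Function.update i j true)
  map_add' f g := by
    funext i
    simp [Pi.add_apply, mul_add, Finset.sum_add_distrib]
  map_smul' c f := by
    funext i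
    simp only [Pi.smul_apply, smul_eq_mul, RingHom.id_apply]
    rw [Finset.mul_sum]
    exact Finset.sum_congr rfl fun j _ => by ring

/-- The operator `K` on `V^{⊗n}`. -/
def Kop (v : k) (n : ℕ) : Tn k n →ₗ[k] Tn k n where
  toFun f := fun i => v ^ (wt i) * f i
  map_add' f g := by
    funext i
    simp [Pi.add_apply, mul_add]
  map_smul' c f := by
    funext i
    simp only [Pi.smul_apply, smul_eq_mul, RingHom.id_apply]
    ring

/-- The symmetric bilinear form on `V^{⊗n}` making the `y_i` orthonormal. -/
def form {n : ℕ} (f g : Tn k n) : k := ∑ i, f i * g i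

/-- Tensoring on the right with the basis vector `y₁` (if `b = true`) or `y₋₁`
(if `b = false`). -/
def tensY {n : ℕ} (b : Bool) (f : Tn k n) : Tn k (n + 1) :=
  fun i => if i (Fin.last n) = b then f (fun t => i t.castSucc) else 0

/-- `Φ₁(b) = b ⊗ y₁`. -/
def Phi1 {n : ℕ} (f : Tn k n) : Tn k (n + 1) := tensY true f

/-- `Φ₂(b) = [w] b ⊗ y₋₁ − v^w (F b) ⊗ y₁`, where `w` is the weight of `b`. -/
def Phi2 (v : k) {n : ℕ} (w : ℤ) (f : Tn k n) : Tn k (n + 1) :=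
  qint v w • tensY false f - v ^ w • tensY true (Fop v n f)

/-- A `1`-factor: all partial sums are nonnegative. -/
def IsOneFactor {n : ℕ} (α : Fin n → Bool) : Prop :=
  ∀ j : Fin n, 0 ≤ ∑ t ∈ Finset.univ.filter (fun t => t ≤ j), sgn (α t)

/-- The orthogonal maximal vectors `Ω(α)`, defined recursively. -/
def Omega (v : k) : (n : ℕ) → (Fin n → Bool) → Tn k n
  | 0, _ => fun _ => 1
  | n + 1, α =>
      if α (Fin.last n) = true then Phi1 (Omega v n fun t => α t.castSucc)
      else Phi2 v (wt fun t => α t.castSucc) (Omega v n fun t => α t.castSucc)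

/-- Exchanging the entries of an index at two positions. -/
def swapPair {n : ℕ} (a b : Fin n) (i : Fin n → Bool) : Fin n → Bool :=
  fun t => if t = a then i b else if t = b then i a else i t

/-- The Temperley--Lieb operator `ė` acting on tensor positions `a` and `b`
(intended: `b = a + 1`). -/
def eop (v : k) {n : ℕ} (a b : Fin n) : Tn k n →ₗ[k] Tn k n where
  toFun f := fun i =>
    if i a = true ∧ i b = false then -v⁻¹ * f i + f (swapPair a b i)
    else if i a = false ∧ i b = true then f (swapPair a b i) - v * f i
    else 0
  map_add' f g := by
    funext i
    simp only [Pi.add_apply]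
    split_ifs <;> ring
  map_smul' c f := by
    funext i
    simp only [Pi.smul_apply, smul_eq_mul, RingHom.id_apply]
    split_ifs <;> ring

/-- The partial sum `α₁ + ⋯ + α_{q-1}` of the entries before position `q`. -/
def prefSum {n : ℕ} (α : Fin n → Bool) (q : Fin n) : ℤ :=
  ∑ t ∈ Finset.univ.filter (fun t => t < q), sgn (α t)

/-- `(i, j)` is a pair of `α`: `α_i = 1` and `j` is the least index `> i` with
`α_i + ⋯ + α_j = 0`. -/
def PairedAt {n : ℕ} (α : Fin n → Bool) (i j : Fin n) : Prop :=
  α i = true ∧ i < j ∧ (∑ t ∈ Finset.Icc i j, sgn (α t)) = 0 ∧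
    ∀ j' : Fin n, i < j' → j' < j → (∑ t ∈ Finset.Icc i j', sgn (α t)) ≠ 0

/-- An index is a defect if it belongs to no pair. -/
def IsDefect {n : ℕ} (α : Fin n → Bool) (i : Fin n) : Prop :=
  (∀ j, ¬ PairedAt α i j) ∧ (∀ j, ¬ PairedAt α j i)

/-- `γ ∈ S(α)`: `γ` is obtained from `α` by negating both entries of each pair
in some subset of the pairs of `α`. -/
def InS {n : ℕ} (α γ : Fin n → Bool) : Prop :=
  (∀ i, IsDefect α i → γ i = α i) ∧
  (∀ i j, PairedAt α i j → (γ i = α i ∧ γ j = α j) ∨ (γ i = !α i ∧ γ j = !α j))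

/-- `σ(α, γ)`: the number of pairs of `α` negated to obtain `γ`. -/
def sigmaCount {n : ℕ} (α γ : Fin n → Bool) : ℕ :=
  Nat.card {p : Fin n × Fin n // PairedAt α p.1 p.2 ∧ γ p.1 ≠ α p.1}

/-- The natural (cellular) vectors `N(α) = Σ_{γ ∈ S(α)} (−v)^{σ(α,γ)} y_γ`,
written in coordinates. -/
def Nvec (v : k) (n : ℕ) (α : Fin n → Bool) : Tn k n :=
  fun γ => if InS α γ then (-v) ^ (sigmaCount α γ) else 0

/-- `β^{(j)}` (0-indexed `j`): change the entry of `β` at the position of its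
`(j+1)`-st defect (0-indexed: defect number `j`) to `−1`. -/
def linkDefect {m : ℕ} (β : Fin m → Bool) (j : ℕ) : Fin m → Bool :=
  match (Finset.sort (Finset.univ.filter (fun i => IsDefect β i)) (· ≤ ·))[j]? with
  | some q => Function.update β q false
  | none => β

/-! Each `Ω(α)` is a highest-weight vector (`E Ω(α) = 0`) of weight `i_α`: this follows along the
recursion from `[E, F] = [wt]` on weight vectors. For the form, `F` is adjoint to `E` twisted by
`v^(1 - wt)`, so moving one `F` at a time across the form gives, for highest-weight vectors `x`,
`y` of weight `w`, `w'`, that `⟨F^a x, F^b y⟩ = 0` if `a ≠ b` or `⟨x, y⟩ = 0`, and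
`⟨F^(a+1) x, F^(a+1) x⟩ = v^(1 - w + 2a) [a+1][w-a] ⟨F^a x, F^a x⟩`. The same computation
shows that the `Ω(α)` are pairwise orthogonal, and that `⟨Ω(α), Ω(α)⟩` is a product of quantum
integers `[m]` with `1 ≤ m ≤ n`, hence nonzero when `[n]! ≠ 0`. An orthogonal family with
nonzero norms is linearly independent, and the index set has `2^n = dim V^{⊗n}` elements. -/

open Finset

section QuantumIntegers

variable {v : k}

lemma qintN_succ (hv : v ≠ 0) (m : ℕ) :
    qintN v (m + 1) = v * qintN v m + v ^ (-(m : ℤ)) := by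
  simp only [qintN, sum_range_succ, mul_sum, ← zpow_one_add₀ hv]
  push_cast
  ring_nf

lemma qintN_succ' (hv : v ≠ 0) (m : ℕ) :
    qintN v (m + 1) = v⁻¹ * qintN v m + v ^ (m : ℤ) := by
  simp only [qintN, sum_range_succ', mul_sum, ← zpow_neg_one, ← zpow_add₀ hv]
  push_cast
  ring_nf

@[simp] lemma qint_natCast (v : k) (m : ℕ) : qint v m = qintN v m := by
  simp [qint]

@[simp] lemma qint_zero (v : k) : qint v 0 = 0 := by
  simpa [qintN] using qint_natCast v 0

@[simp] lemma qint_one (v : k) : qint v 1 = 1 := by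
  simpa [qintN] using qint_natCast v 1

lemma qint_neg (v : k) (m : ℤ) : qint v (-m) = -qint v m := by
  unfold qint
  rcases lt_trichotomy m 0 with h | rfl | h
  · rw [if_pos (by omega), if_neg (by omega), neg_neg]
  · simp [qintN]
  · rw [if_neg (by omega), if_pos h.le, neg_neg]

lemma qint_add_one (hv : v ≠ 0) (m : ℤ) :
    qint v (m + 1) = v * qint v m + v ^ (-m) := by
  obtain ⟨a, rfl | rfl⟩ := Int.eq_nat_or_neg m
  · exact_mod_cast qintN_succ hv a
  · cases a with
    | zero => simp
    | succ a =>
      rw [show -((a + 1 : ℕ) : ℤ) + 1 = -(a : ℤ) by push_cast; ring, qint_neg, qint_neg,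
        qint_natCast, qint_natCast, qintN_succ' hv, neg_neg]
      push_cast
      rw [zpow_add_one₀ hv]
      field_simp
      ring

lemma qint_add (hv : v ≠ 0) (a b : ℤ) :
    qint v (a + b) = v ^ a * qint v b + v ^ (-b) * qint v a := by
  induction a using Int.induction_on with
  | zero => simp
  | succ a ih =>
    rw [add_right_comm, qint_add_one hv, ih, qint_add_one hv, zpow_add_one₀ hv,
      neg_add, zpow_add₀ hv]
    ring
  | pred a ih =>
    have h := qint_add_one hv (-(a : ℤ) - 1 + b)
    have h' := qint_add_one hv (-(a : ℤ) - 1)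
    rw [show -(a : ℤ) - 1 + b + 1 = -a + b by ring, ih] at h
    rw [show -(a : ℤ) - 1 + 1 = -a by ring] at h'
    rw [h'] at h
    simp only [zpow_add₀ hv, zpow_sub₀ hv, zpow_neg, neg_add, neg_sub, zpow_one] at h ⊢
    field_simp at h ⊢
    linear_combination -h

lemma qint_add_one' (hv : v ≠ 0) (m : ℤ) :
    qint v (m + 1) = v⁻¹ * qint v m + v ^ m := by
  simp [qint_add hv m 1, add_comm]

lemma qint_sub_one (hv : v ≠ 0) (m : ℤ) : qint v (m - 1) = v * qint v m - v ^ m := by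
  have h := qint_add_one' hv (m - 1)
  rw [sub_add_cancel, zpow_sub_one₀ hv] at h
  rw [h]
  field_simp
  ring

lemma qint_sub (hv : v ≠ 0) (a b : ℤ) :
    qint v (a - b) = v ^ (-b) * qint v a - v ^ (-a) * qint v b := by
  rw [sub_eq_neg_add, qint_add hv, qint_neg]
  ring

/-- The quantum analogue of `(a + 1)(w - a) = a(w - a + 1) + (w - 2a)`. -/
lemma qint_add_one_mul_qint_sub (hv : v ≠ 0) (w a : ℤ) :
    qint v (a + 1) * qint v (w - a) = qint v a * qint v (w - a + 1) + qint v (w - 2 * a) := by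
  rw [qint_add_one hv, qint_add_one hv, show w - 2 * a = (w - a) - a by ring, qint_sub hv (w - a) a,
    neg_sub, zpow_sub₀ hv]
  ring

lemma qfact_succ (v : k) (n : ℕ) : qfact v (n + 1) = qfact v n * qintN v (n + 1) :=
  prod_range_succ _ _

lemma qint_ne_zero_of_qfact_ne_zero {N : ℕ} (hq : qfact v N ≠ 0) {m : ℤ} (h1 : 1 ≤ m)
    (h2 : m ≤ N) : qint v m ≠ 0 := by
  lift m to ℕ using by omega
  rw [qint_natCast]
  intro h0
  refine hq (prod_eq_zero (i := m - 1) (mem_range.mpr (by omega)) ?_)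
  rwa [Nat.sub_add_cancel (by omega)]

end QuantumIntegers

section Tensors

variable {n : ℕ}

@[simp] lemma sgn_true : sgn true = 1 := rfl

@[simp] lemma sgn_false : sgn false = -1 := rfl

lemma wt_snoc (i : Fin n → Bool) (b : Bool) :
    wt (Fin.snoc i b : Fin (n + 1) → Bool) = wt i + sgn b := by
  simp [wt, Fin.sum_univ_castSucc]

lemma wt_eq_wt_init_add (α : Fin (n + 1) → Bool) :
    wt α = wt (Fin.init α) + sgn (α (Fin.last n)) := by
  conv_lhs => rw [← Fin.snoc_init_self α]
  exact wt_snoc _ _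

lemma wt_update (i : Fin n → Bool) (j : Fin n) (b : Bool) :
    wt (Function.update i j b) = wt i - sgn (i j) + sgn b := by
  have h : ∀ t ∈ univ.erase j, sgn (Function.update i j b t) = sgn (i t) := fun t ht => by
    rw [Function.update_of_ne (ne_of_mem_erase ht)]
  simp only [wt, ← add_sum_erase _ _ (mem_univ j), sum_congr rfl h, Function.update_self]
  ring

lemma wt_le (i : Fin n → Bool) : wt i ≤ n := by
  calc wt i ≤ ∑ _t : Fin n, (1 : ℤ) := sum_le_sum fun t _ => by cases i t <;> simp
    _ = n := by simp

lemma sum_snoc (g : (Fin (n + 1) → Bool) → k) :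
    ∑ i, g i = ∑ i, (g (Fin.snoc i true) + g (Fin.snoc i false)) := by
  rw [← (Fin.snocEquiv fun _ => Bool).sum_comp, Fintype.sum_prod_type, Fintype.sum_bool,
    ← sum_add_distrib]
  rfl

lemma funext_snoc {f g : Tn k (n + 1)} (h : ∀ i b, f (Fin.snoc i b) = g (Fin.snoc i b)) :
    f = g :=
  funext fun i => Fin.snoc_init_self i ▸ h _ _

@[simp] lemma tensY_snoc (b c : Bool) (f : Tn k n) (i : Fin n → Bool) :
    tensY b f (Fin.snoc i c) = if c = b then f i else 0 := by
  simp [tensY]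

lemma exists_eq_tensY_add_tensY (f : Tn k (n + 1)) :
    ∃ f₁ f₂, f = tensY true f₁ + tensY false f₂ :=
  ⟨fun i => f (Fin.snoc i true), fun i => f (Fin.snoc i false),
    funext_snoc fun i b => by cases b <;> simp⟩

@[simp] lemma tensY_zero (b : Bool) : tensY b (0 : Tn k n) = 0 :=
  funext_snoc fun _ _ => by simp

lemma tensY_smul (b : Bool) (c : k) (f : Tn k n) : tensY b (c • f) = c • tensY b f :=
  funext_snoc fun _ _ => by simp

end Tensors

section Operators

variable {v : k} {n : ℕ}

def sufSum (α : Fin n → Bool) (q : Fin n) : ℤ :=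
  ∑ t ∈ univ.filter (fun t => q < t), sgn (α t)

lemma Fop_apply (f : Tn k n) (i : Fin n → Bool) :
    Fop v n f i = ∑ j ∈ univ.filter (fun j => i j = false),
      v ^ (-sufSum i j) * f (Function.update i j true) := rfl

lemma Eop_apply (f : Tn k n) (i : Fin n → Bool) :
    Eop v n f i = ∑ j ∈ univ.filter (fun j => i j = true),
      v ^ prefSum i j * f (Function.update i j false) := rfl

lemma Kop_apply (f : Tn k n) (i : Fin n → Bool) : Kop v n f i = v ^ wt i * f i := rfl

lemma prefSum_snoc_castSucc (i : Fin n → Bool) (b : Bool) (j : Fin n) :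
    prefSum (Fin.snoc i b : Fin (n + 1) → Bool) j.castSucc = prefSum i j := by
  simp [prefSum, sum_filter, Fin.sum_univ_castSucc, (Fin.castSucc_lt_last j).not_gt]

lemma prefSum_snoc_last (i : Fin n → Bool) (b : Bool) :
    prefSum (Fin.snoc i b : Fin (n + 1) → Bool) (Fin.last n) = wt i := by
  simp [prefSum, wt, sum_filter, Fin.sum_univ_castSucc, Fin.castSucc_lt_last]

lemma sufSum_snoc_castSucc (i : Fin n → Bool) (b : Bool) (j : Fin n) :
    sufSum (Fin.snoc i b : Fin (n + 1) → Bool) j.castSucc = sufSum i j + sgn b := by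
  simp [sufSum, sum_filter, Fin.sum_univ_castSucc, Fin.castSucc_lt_last]

lemma sufSum_snoc_last (i : Fin n → Bool) (b : Bool) :
    sufSum (Fin.snoc i b : Fin (n + 1) → Bool) (Fin.last n) = 0 := by
  simp [sufSum, sum_filter, Fin.sum_univ_castSucc, (Fin.castSucc_lt_last _).not_gt]

lemma Fop_apply_snoc (f : Tn k (n + 1)) (i : Fin n → Bool) (b : Bool) :
    Fop v (n + 1) f (Fin.snoc i b) =
      ∑ j ∈ univ.filter (fun j => i j = false),
        v ^ (-(sufSum i j + sgn b)) * f (Fin.snoc (Function.update i j true) b) +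
      if b = false then f (Fin.snoc i true) else 0 := by
  rw [Fop_apply, sum_filter, Fin.sum_univ_castSucc, sum_filter]
  simp [sufSum_snoc_castSucc, sufSum_snoc_last, ← Fin.snoc_update, Fin.update_snoc_last]

lemma Eop_apply_snoc (f : Tn k (n + 1)) (i : Fin n → Bool) (b : Bool) :
    Eop v (n + 1) f (Fin.snoc i b) =
      ∑ j ∈ univ.filter (fun j => i j = true),
        v ^ prefSum i j * f (Fin.snoc (Function.update i j false) b) +
      if b = true then v ^ wt i * f (Fin.snoc i false) else 0 := by
  rw [Eop_apply, sum_filter, Fin.sum_univ_castSucc, sum_filter]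
  simp [prefSum_snoc_castSucc, prefSum_snoc_last, ← Fin.snoc_update, Fin.update_snoc_last]

lemma Fop_tensY_true (hv : v ≠ 0) (g : Tn k n) :
    Fop v (n + 1) (tensY true g) = tensY true (v⁻¹ • Fop v n g) + tensY false g :=
  funext_snoc fun i b => by
    rw [Fop_apply_snoc]
    cases b <;> simp [Fop_apply, mul_sum, zpow_add₀ hv, mul_assoc, -Fin.snoc_update]

lemma Fop_tensY_false (hv : v ≠ 0) (g : Tn k n) :
    Fop v (n + 1) (tensY false g) = tensY false (v • Fop v n g) :=
  funext_snoc fun i b => by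
    rw [Fop_apply_snoc]
    cases b <;> simp [Fop_apply, mul_sum, zpow_add₀ hv, mul_assoc, -Fin.snoc_update]

lemma Eop_tensY_true (g : Tn k n) : Eop v (n + 1) (tensY true g) = tensY true (Eop v n g) :=
  funext_snoc fun i b => by
    rw [Eop_apply_snoc]
    cases b <;> simp [Eop_apply, -Fin.snoc_update]

lemma Eop_tensY_false (g : Tn k n) :
    Eop v (n + 1) (tensY false g) = tensY false (Eop v n g) + tensY true (Kop v n g) :=
  funext_snoc fun i b => by
    rw [Eop_apply_snoc]
    cases b <;> simp [Eop_apply, Kop_apply, -Fin.snoc_update]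

end Operators

section Weights

variable {v : k} {n : ℕ}

def IsWeightVec (w : ℤ) (f : Tn k n) : Prop := ∀ i, f i ≠ 0 → wt i = w

namespace IsWeightVec

variable {w : ℤ} {f g : Tn k n}

lemma mul_apply (h : IsWeightVec w f) (c : ℤ → k) (i : Fin n → Bool) :
    c (wt i) * f i = c w * f i := by
  by_cases h0 : f i = 0
  · simp [h0]
  · rw [h i h0]

lemma smul (h : IsWeightVec w f) (c : k) : IsWeightVec w (c • f) :=
  fun i hi => h i (right_ne_zero_of_mul hi)

lemma sub (hf : IsWeightVec w f) (hg : IsWeightVec w g) : IsWeightVec w (f - g) := by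
  intro i hi
  by_cases h0 : f i = 0
  · exact hg i (by simpa [h0] using hi)
  · exact hf i h0

lemma tensY (h : IsWeightVec w f) (b : Bool) : IsWeightVec (w + sgn b) (tensY b f) := by
  intro i hi
  rw [← Fin.snoc_init_self i, tensY_snoc] at hi
  split_ifs at hi with hb
  · rw [wt_eq_wt_init_add, h _ hi, hb]
  · exact absurd rfl hi

lemma map_Fop (h : IsWeightVec w f) : IsWeightVec (w - 2) (Fop v n f) := by
  intro i hi
  rw [Fop_apply] at hi
  obtain ⟨j, hj, hne⟩ := exists_ne_zero_of_sum_ne_zero hi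
  have := h _ (right_ne_zero_of_mul hne)
  rw [wt_update, (mem_filter.mp hj).2] at this
  simp only [sgn_true, sgn_false] at this
  omega

lemma map_Fop_pow (h : IsWeightVec w f) (a : ℕ) : IsWeightVec (w - 2 * a) ((Fop v n ^ a) f) := by
  induction a with
  | zero => simpa using h
  | succ a ih =>
    rw [pow_succ', Module.End.mul_apply]
    convert ih.map_Fop using 1
    push_cast
    ring

lemma Kop_eq (h : IsWeightVec w f) : Kop v n f = v ^ w • f :=
  funext fun i => h.mul_apply (v ^ ·) i

end IsWeightVec

end Weights

section Commutator

variable {v : k} {n : ℕ}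

lemma Fop_Kop_apply (g : Tn k n) (i : Fin n → Bool) :
    Fop v n (Kop v n g) i = v ^ (wt i + 2) * Fop v n g i := by
  simp only [Fop_apply, Kop_apply, mul_sum]
  refine sum_congr rfl fun j hj => ?_
  rw [wt_update, (mem_filter.mp hj).2, sgn_true, sgn_false]
  ring_nf

lemma Eop_Fop_sub_Fop_Eop_apply (hv : v ≠ 0) (f : Tn k n) (i : Fin n → Bool) :
    Eop v n (Fop v n f) i - Fop v n (Eop v n f) i = qint v (wt i) * f i := by
  induction n with
  | zero => simp [Eop_apply, Fop_apply, wt]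
  | succ n ih =>
    obtain ⟨f₁, f₂, rfl⟩ := exists_eq_tensY_add_tensY f
    induction i using Fin.snocCases with
    | snoc i b =>
    cases b <;>
      simp only [map_add, map_smul, Fop_tensY_true hv, Fop_tensY_false hv, Eop_tensY_true,
        Eop_tensY_false, tensY_smul, Pi.add_apply, Pi.smul_apply, smul_eq_mul, tensY_snoc,
        Kop_apply, wt_snoc, ↓reduceIte, Bool.false_eq_true, Bool.true_eq_false, mul_zero,
        add_zero, zero_add]
    · rw [sgn_false, ← sub_eq_add_neg, qint_sub_one hv]
      linear_combination v * ih f₂ i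
    · rw [sgn_true, Fop_Kop_apply, qint_add_one' hv, zpow_add₀ hv]
      field_simp
      linear_combination ih f₁ i

end Commutator

section Adjoint

variable {v : k} {n : ℕ}

lemma form_eq_dotProduct (f g : Tn k n) : form f g = f ⬝ᵥ g := rfl

lemma tensY_dotProduct_tensY (b c : Bool) (f g : Tn k n) :
    tensY b f ⬝ᵥ tensY c g = if b = c then f ⬝ᵥ g else 0 := by
  rw [dotProduct, sum_snoc]
  cases b <;> cases c <;> simp [dotProduct]

def twistedEop (v : k) (n : ℕ) (g : Tn k n) : Tn k n := fun i => v ^ (1 - wt i) * Eop v n g i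

lemma twistedEop_tensY_add_tensY (hv : v ≠ 0) (g₁ g₂ : Tn k n) :
    twistedEop v (n + 1) (tensY true g₁ + tensY false g₂) =
      tensY true (v⁻¹ • twistedEop v n g₁ + g₂) + tensY false (v • twistedEop v n g₂) :=
  funext_snoc fun i b => by
    cases b <;>
      simp only [twistedEop, map_add, Eop_tensY_true, Eop_tensY_false, Pi.add_apply,
        Pi.smul_apply, smul_eq_mul, tensY_snoc, Kop_apply, ↓reduceIte, Bool.false_eq_true,
        Bool.true_eq_false, add_zero, zero_add, wt_snoc, sgn_true, sgn_false, zpow_sub₀ hv,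
        zpow_add₀ hv] <;>
      field_simp

lemma Fop_dotProduct (hv : v ≠ 0) (f g : Tn k n) :
    Fop v n f ⬝ᵥ g = f ⬝ᵥ twistedEop v n g := by
  induction n with
  | zero => simp [dotProduct, Fop_apply, twistedEop, Eop_apply]
  | succ n ih =>
    obtain ⟨f₁, f₂, rfl⟩ := exists_eq_tensY_add_tensY f
    obtain ⟨g₁, g₂, rfl⟩ := exists_eq_tensY_add_tensY g
    simp only [twistedEop_tensY_add_tensY hv, map_add, Fop_tensY_true hv, Fop_tensY_false hv,
      add_dotProduct, dotProduct_add, tensY_dotProduct_tensY, smul_dotProduct, dotProduct_smul,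
      ih, Bool.false_eq_true, Bool.true_eq_false, if_true, if_false]
    ring

end Adjoint

section HighestWeight

variable {v : k} {n : ℕ} {w w' : ℤ} {f g : Tn k n}

lemma Eop_Fop_of_isWeightVec (hv : v ≠ 0) (hf : IsWeightVec w f) :
    Eop v n (Fop v n f) = Fop v n (Eop v n f) + qint v w • f :=
  funext fun i => by
    rw [Pi.add_apply, Pi.smul_apply, smul_eq_mul, ← hf.mul_apply (qint v),
      ← Eop_Fop_sub_Fop_Eop_apply hv]
    ring

lemma Eop_Fop_pow_succ (hv : v ≠ 0) (hE : Eop v n f = 0) (hf : IsWeightVec w f) (a : ℕ) :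
    Eop v n ((Fop v n ^ (a + 1)) f) = (qint v (a + 1) * qint v (w - a)) • (Fop v n ^ a) f := by
  induction a with
  | zero => simp [Eop_Fop_of_isWeightVec hv hf, hE]
  | succ a ih =>
    rw [pow_succ', Module.End.mul_apply, Eop_Fop_of_isWeightVec hv (hf.map_Fop_pow _), ih,
      map_smul, ← Module.End.mul_apply, ← pow_succ', ← add_smul]
    have h := qint_add_one_mul_qint_sub hv w (a + 1)
    rw [show w - (a + 1) + 1 = w - a by ring] at h
    push_cast
    rw [h]

lemma twistedEop_Fop_pow_succ (hv : v ≠ 0) (hE : Eop v n f = 0) (hf : IsWeightVec w f)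
    (a : ℕ) :
    twistedEop v n ((Fop v n ^ (a + 1)) f) =
      (v ^ (1 - (w - 2 * a)) * (qint v (a + 1) * qint v (w - a))) • (Fop v n ^ a) f :=
  funext fun i => by
    simp only [twistedEop, Eop_Fop_pow_succ hv hE hf, Pi.smul_apply, smul_eq_mul]
    rw [mul_left_comm, (hf.map_Fop_pow a).mul_apply (fun u => v ^ (1 - u))]
    ring

lemma Fop_pow_succ_dotProduct_Fop_pow_succ (hv : v ≠ 0) (hEg : Eop v n g = 0)
    (hg : IsWeightVec w' g) (a b : ℕ) :
    (Fop v n ^ (a + 1)) f ⬝ᵥ (Fop v n ^ (b + 1)) g =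
      (v ^ (1 - (w' - 2 * b)) * (qint v (b + 1) * qint v (w' - b))) *
        ((Fop v n ^ a) f ⬝ᵥ (Fop v n ^ b) g) := by
  rw [pow_succ', Module.End.mul_apply, Fop_dotProduct hv, twistedEop_Fop_pow_succ hv hEg hg,
    dotProduct_smul, smul_eq_mul]

lemma Fop_pow_succ_dotProduct_of_Eop_eq_zero (hv : v ≠ 0) (hEg : Eop v n g = 0) (a : ℕ) :
    (Fop v n ^ (a + 1)) f ⬝ᵥ g = 0 := by
  have : twistedEop v n g = 0 := funext fun i => by simp [twistedEop, hEg]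
  rw [pow_succ', Module.End.mul_apply, Fop_dotProduct hv, this, dotProduct_zero]

lemma Fop_pow_dotProduct_Fop_pow_eq_zero (hv : v ≠ 0) (hEf : Eop v n f = 0)
    (hEg : Eop v n g = 0) (hg : IsWeightVec w' g) {a b : ℕ} (h : f ⬝ᵥ g = 0 ∨ a ≠ b) :
    (Fop v n ^ a) f ⬝ᵥ (Fop v n ^ b) g = 0 := by
  induction a generalizing b with
  | zero =>
    cases b with
    | zero => simpa using h
    | succ b =>
      rw [pow_zero, Module.End.one_apply, dotProduct_comm,
        Fop_pow_succ_dotProduct_of_Eop_eq_zero hv hEf]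
  | succ a ih =>
    cases b with
    | zero => exact Fop_pow_succ_dotProduct_of_Eop_eq_zero hv hEg a
    | succ b =>
      rw [Fop_pow_succ_dotProduct_Fop_pow_succ hv hEg hg, ih (h.imp_right (by omega)), mul_zero]

lemma Fop_pow_dotProduct_self_ne_zero (hv : v ≠ 0) (hq : qfact v n ≠ 0) (hE : Eop v n f = 0)
    (hf : IsWeightVec w f) (hff : f ⬝ᵥ f ≠ 0) (hwn : w ≤ n) {a : ℕ} (ha : a ≤ w) :
    (Fop v n ^ a) f ⬝ᵥ (Fop v n ^ a) f ≠ 0 := by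
  induction a with
  | zero => simpa using hff
  | succ a ih =>
    rw [Fop_pow_succ_dotProduct_Fop_pow_succ hv hE hf]
    refine mul_ne_zero (mul_ne_zero (zpow_ne_zero _ hv) (mul_ne_zero ?_ ?_)) (ih (by omega))
    · exact qint_ne_zero_of_qfact_ne_zero hq (by omega) (by omega)
    · exact qint_ne_zero_of_qfact_ne_zero hq (by omega) (by omega)

end HighestWeight

section OneFactors

variable {n : ℕ}

lemma sum_filter_le_castSucc (α : Fin (n + 1) → Bool) (j : Fin n) :
    ∑ t ∈ univ.filter (fun t => t ≤ j.castSucc), sgn (α t) =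
      ∑ t ∈ univ.filter (fun t => t ≤ j), sgn (Fin.init α t) := by
  simp [sum_filter, Fin.sum_univ_castSucc, (Fin.castSucc_lt_last j).not_ge, Fin.init]

lemma sum_filter_le_last (α : Fin (n + 1) → Bool) :
    ∑ t ∈ univ.filter (fun t => t ≤ Fin.last n), sgn (α t) = wt α := by
  simp [wt, Fin.le_last]

lemma IsOneFactor.init {α : Fin (n + 1) → Bool} (h : IsOneFactor α) : IsOneFactor (Fin.init α) :=
  fun j => sum_filter_le_castSucc α j ▸ h j.castSucc

lemma IsOneFactor.wt_nonneg {α : Fin n → Bool} (h : IsOneFactor α) : 0 ≤ wt α := by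
  cases n with
  | zero => simp [wt]
  | succ n => exact sum_filter_le_last α ▸ h (Fin.last n)

lemma IsOneFactor.one_le_wt_init {α : Fin (n + 1) → Bool} (h : IsOneFactor α)
    (hl : α (Fin.last n) = false) : 1 ≤ wt (Fin.init α) := by
  have := h.wt_nonneg
  rw [wt_eq_wt_init_add, hl, sgn_false] at this
  omega

end OneFactors

section Omega

variable {v : k} {n : ℕ}

lemma Omega_succ_of_last_true {α : Fin (n + 1) → Bool} (h : α (Fin.last n) = true) :
    Omega v (n + 1) α = Phi1 (Omega v n (Fin.init α)) := by
  rw [Omega, if_pos h]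
  rfl

lemma Omega_succ_of_last_false {α : Fin (n + 1) → Bool} (h : α (Fin.last n) = false) :
    Omega v (n + 1) α = Phi2 v (wt (Fin.init α)) (Omega v n (Fin.init α)) := by
  rw [Omega, if_neg (by simp [h])]
  rfl

lemma isWeightVec_Omega (α : Fin n → Bool) : IsWeightVec (wt α) (Omega v n α) := by
  induction n with
  | zero => simp [IsWeightVec, wt]
  | succ n ih =>
    rw [wt_eq_wt_init_add]
    cases h : α (Fin.last n)
    · rw [Omega_succ_of_last_false h, Phi2]
      refine (((ih _).tensY false).smul _).sub ?_
      convert ((ih _).map_Fop.tensY true).smul _ using 1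
      simp only [sgn_true, sgn_false]
      ring
    · rw [Omega_succ_of_last_true h, Phi1]
      exact (ih _).tensY true

lemma Eop_Omega (hv : v ≠ 0) (α : Fin n → Bool) : Eop v n (Omega v n α) = 0 := by
  induction n with
  | zero => funext i; simp [Eop_apply]
  | succ n ih =>
    cases h : α (Fin.last n)
    · rw [Omega_succ_of_last_false h, Phi2, map_sub, map_smul, map_smul, Eop_tensY_false,
        Eop_tensY_true, Eop_Fop_of_isWeightVec hv (isWeightVec_Omega _), ih,
        (isWeightVec_Omega _).Kop_eq]
      simp only [map_zero, tensY_zero, zero_add, tensY_smul, smul_smul, mul_comm, sub_self]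
    · rw [Omega_succ_of_last_true h, Phi1, Eop_tensY_true, ih, tensY_zero]

lemma Phi1_dotProduct_Phi1 (f g : Tn k n) : Phi1 f ⬝ᵥ Phi1 g = f ⬝ᵥ g := by
  simp [Phi1, tensY_dotProduct_tensY]

lemma Phi1_dotProduct_Phi2 (hv : v ≠ 0) {f : Tn k n} (hE : Eop v n f = 0) (w : ℤ) (g : Tn k n) :
    Phi1 f ⬝ᵥ Phi2 v w g = 0 := by
  have h := Fop_pow_succ_dotProduct_of_Eop_eq_zero hv hE 0 (f := g)
  rw [pow_one] at h
  simp [Phi1, Phi2, dotProduct_sub, tensY_dotProduct_tensY, dotProduct_comm f, h]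

lemma Phi2_dotProduct_Phi2 (w w' : ℤ) (f g : Tn k n) :
    Phi2 v w f ⬝ᵥ Phi2 v w' g =
      qint v w * qint v w' * (f ⬝ᵥ g) + v ^ w * v ^ w' * (Fop v n f ⬝ᵥ Fop v n g) := by
  simp only [Phi2, dotProduct_sub, sub_dotProduct, dotProduct_smul, smul_dotProduct,
    tensY_dotProduct_tensY, ↓reduceIte, Bool.true_eq_false, Bool.false_eq_true, smul_eq_mul,
    mul_zero, sub_zero, zero_sub]
  ring

lemma Fop_dotProduct_Fop (hv : v ≠ 0) {f g : Tn k n} {w : ℤ} (hE : Eop v n g = 0)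
    (hg : IsWeightVec w g) : Fop v n f ⬝ᵥ Fop v n g = v ^ (1 - w) * qint v w * (f ⬝ᵥ g) := by
  simpa using Fop_pow_succ_dotProduct_Fop_pow_succ hv hE hg 0 0 (f := f)

lemma Omega_dotProduct_Omega_of_ne (hv : v ≠ 0) {α β : Fin n → Bool} (hαβ : α ≠ β) :
    Omega v n α ⬝ᵥ Omega v n β = 0 := by
  induction n with
  | zero => exact absurd (Subsingleton.elim α β) hαβ
  | succ n ih =>
    have hinit (h : α (Fin.last n) = β (Fin.last n)) : Fin.init α ≠ Fin.init β := fun h' =>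
      hαβ (by rw [← Fin.snoc_init_self α, ← Fin.snoc_init_self β, h, h'])
    cases hα : α (Fin.last n) <;> cases hβ : β (Fin.last n)
    · rw [Omega_succ_of_last_false hα, Omega_succ_of_last_false hβ, Phi2_dotProduct_Phi2,
        Fop_dotProduct_Fop hv (Eop_Omega hv _) (isWeightVec_Omega _), ih (hinit (hα.trans hβ.symm))]
      ring
    · rw [Omega_succ_of_last_false hα, Omega_succ_of_last_true hβ, dotProduct_comm,
        Phi1_dotProduct_Phi2 hv (Eop_Omega hv _)]
    · rw [Omega_succ_of_last_true hα, Omega_succ_of_last_false hβ,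
        Phi1_dotProduct_Phi2 hv (Eop_Omega hv _)]
    · rw [Omega_succ_of_last_true hα, Omega_succ_of_last_true hβ, Phi1_dotProduct_Phi1,
        ih (hinit (hα.trans hβ.symm))]

lemma Omega_dotProduct_self_ne_zero (hv : v ≠ 0) (hq : qfact v n ≠ 0) {α : Fin n → Bool}
    (hα : IsOneFactor α) : Omega v n α ⬝ᵥ Omega v n α ≠ 0 := by
  induction n with
  | zero => simp [Omega, dotProduct]
  | succ n ih =>
    have hN := ih (left_ne_zero_of_mul (qfact_succ v n ▸ hq)) hα.init
    cases h : α (Fin.last n)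
    · rw [Omega_succ_of_last_false h, Phi2_dotProduct_Phi2,
        Fop_dotProduct_Fop hv (Eop_Omega hv _) (isWeightVec_Omega _)]
      have hw := hα.one_le_wt_init h
      have hwn := wt_le (Fin.init α)
      set w := wt (Fin.init α)
      set N := Omega v n (Fin.init α) ⬝ᵥ Omega v n (Fin.init α)
      convert_to qint v w * (v * qint v (w + 1)) * N ≠ 0 using 1
      · rw [qint_add_one' hv, zpow_sub₀ hv, zpow_one]
        field_simp
      refine mul_ne_zero (mul_ne_zero ?_ (mul_ne_zero hv ?_)) hN
      · exact qint_ne_zero_of_qfact_ne_zero hq hw (by omega)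
      · exact qint_ne_zero_of_qfact_ne_zero hq (by omega) (by push_cast; omega)
    · rwa [Omega_succ_of_last_true h, Phi1_dotProduct_Phi1]

end Omega

section Counting

variable {n : ℕ}

lemma IsOneFactor.snoc {α : Fin n → Bool} (h : IsOneFactor α) {b : Bool}
    (hb : 0 ≤ wt α + sgn b) : IsOneFactor (Fin.snoc α b : Fin (n + 1) → Bool) := by
  intro j
  induction j using Fin.lastCases with
  | last => rwa [sum_filter_le_last, wt_snoc]
  | cast j => simpa [sum_filter_le_castSucc] using h j

abbrev OneFactorIndex (n : ℕ) :=
  {p : (Fin n → Bool) × ℕ // IsOneFactor p.1 ∧ (p.2 : ℤ) ≤ wt p.1}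

/-- The Clebsch–Gordan rule `L(w) ⊗ V ≅ L(w + 1) ⊕ L(w - 1)` at the level of index sets. -/
def OneFactorIndex.extend : OneFactorIndex n × Bool → OneFactorIndex (n + 1)
  | (⟨(α, a), hα, ha⟩, true) =>
    ⟨(Fin.snoc α true, a), hα.snoc (by simp only [sgn_true] at ha ⊢; omega),
      by simp only [wt_snoc, sgn_true] at ha ⊢; omega⟩
  | (⟨(α, a), hα, ha⟩, false) =>
    if h : (a : ℤ) = wt α then
      ⟨(Fin.snoc α true, a + 1), hα.snoc (by simp only [sgn_true] at ha ⊢; omega),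
        by simp only [wt_snoc, sgn_true] at ha ⊢; omega⟩
    else
      ⟨(Fin.snoc α false, a), hα.snoc (by simp only [sgn_false] at ha ⊢; omega),
        by simp only [wt_snoc, sgn_false] at ha ⊢; omega⟩

lemma OneFactorIndex.extend_bijective : Function.Bijective (extend (n := n)) := by
  constructor
  · rintro ⟨⟨⟨α, a⟩, hα, ha⟩, b⟩ ⟨⟨⟨β, c⟩, hβ, hc⟩, d⟩ h
    simp only at ha hc
    cases b <;> cases d <;> simp only [extend] at h <;> (try split_ifs at h) <;>
      simp_all only [Subtype.ext_iff, Prod.mk.injEq, Fin.snoc_inj, Bool.true_eq_false,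
        Bool.false_eq_true, Nat.add_right_cancel_iff, Nat.add_eq_left, one_ne_zero, and_true,
        true_and, and_false, false_and, and_self]
    all_goals obtain ⟨rfl, rfl⟩ := h; omega
  · rintro ⟨⟨α, a⟩, hα, ha⟩
    induction α using Fin.snocCases with
    | snoc α b =>
    dsimp only at hα ha
    have hα' : IsOneFactor α := by simpa using hα.init
    rw [wt_snoc] at ha
    cases b <;> simp only [sgn_true, sgn_false] at ha
    · refine ⟨(⟨(α, a), hα', by dsimp only; omega⟩, false), ?_⟩
      simp only [extend]
      rw [dif_neg (by omega)]
    · by_cases h : (a : ℤ) ≤ wt α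
      · exact ⟨(⟨(α, a), hα', h⟩, true), rfl⟩
      · have := hα'.wt_nonneg
        obtain ⟨a, rfl⟩ : ∃ c, a = c + 1 := ⟨a - 1, by omega⟩
        refine ⟨(⟨(α, a), hα', by dsimp only; omega⟩, false), ?_⟩
        simp only [extend]
        rw [dif_pos (by omega)]

lemma OneFactorIndex.card (n : ℕ) : Nat.card (OneFactorIndex n) = 2 ^ n := by
  induction n with
  | zero =>
    rw [pow_zero, Nat.card_eq_one_iff_exists]
    refine ⟨⟨(Fin.elim0, 0), fun j => j.elim0, by simp [wt]⟩, fun ⟨⟨α, a⟩, _, ha⟩ => ?_⟩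
    have : a = 0 := by simpa [wt] using ha
    simp [this, Subsingleton.elim α Fin.elim0]
  | succ n ih =>
    rw [← Nat.card_congr (Equiv.ofBijective _ extend_bijective), Nat.card_prod, ih,
      Nat.card_eq_fintype_card, Fintype.card_bool, pow_succ]

instance (n : ℕ) : Finite (OneFactorIndex n) :=
  Nat.finite_of_card_ne_zero (by simp [OneFactorIndex.card])

end Counting

section Basis

variable {v : k} {n : ℕ}

lemma Fop_pow_Omega_dotProduct_of_ne (hv : v ≠ 0) {p q : OneFactorIndex n} (hpq : p ≠ q) :
    (Fop v n ^ p.1.2) (Omega v n p.1.1) ⬝ᵥ (Fop v n ^ q.1.2) (Omega v n q.1.1) = 0 := by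
  refine Fop_pow_dotProduct_Fop_pow_eq_zero hv (Eop_Omega hv _) (Eop_Omega hv _)
    (isWeightVec_Omega _) ?_
  by_cases hα : p.1.1 = q.1.1
  · exact Or.inr fun ha => hpq (Subtype.ext (Prod.ext hα ha))
  · exact Or.inl (Omega_dotProduct_Omega_of_ne hv hα)

lemma Fop_pow_Omega_dotProduct_self_ne_zero (hv : v ≠ 0) (hq : qfact v n ≠ 0)
    (p : OneFactorIndex n) :
    (Fop v n ^ p.1.2) (Omega v n p.1.1) ⬝ᵥ (Fop v n ^ p.1.2) (Omega v n p.1.1) ≠ 0 :=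
  Fop_pow_dotProduct_self_ne_zero hv hq (Eop_Omega hv _) (isWeightVec_Omega _)
    (Omega_dotProduct_self_ne_zero hv hq p.2.1) (wt_le _) p.2.2

end Basis

/-- if `[n]! ≠ 0`, the vectors `F^a Ω(α)` with `0 ≤ a ≤ i_α` form a
basis of `V^{⊗n}` whose elements are pairwise orthogonal. -/
theorem stmt_14 {k : Type*} [Field k] (v : k) (hv : v ≠ 0) (n : ℕ)
    (hq : qfact v n ≠ 0) :
    ∃ b : Module.Basis {p : (Fin n → Bool) × ℕ // IsOneFactor p.1 ∧ (p.2 : ℤ) ≤ wt p.1} k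
        (Tn k n),
      (∀ p, b p = (Fop v n ^ p.1.2) (Omega v n p.1.1)) ∧
      (∀ p q, p ≠ q → form (b p) (b q) = 0) := by
  have hli : LinearIndependent k fun p : OneFactorIndex n => (Fop v n ^ p.1.2) (Omega v n p.1.1) :=
    LinearMap.linearIndependent_of_isOrthoᵢ (B := dotProductBilin k k)
      (fun _ _ => Fop_pow_Omega_dotProduct_of_ne hv) (Fop_pow_Omega_dotProduct_self_ne_zero hv hq)
  let := Fintype.ofFinite (OneFactorIndex n)
  have hcard : Fintype.card (OneFactorIndex n) = Module.finrank k (Tn k n) := by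
    rw [Module.finrank_fintype_fun_eq_card, ← Nat.card_eq_fintype_card, OneFactorIndex.card]
    simp
  exact ⟨basisOfLinearIndependentOfCardEqFinrank' _ hli hcard, by simp,
    fun p q hpq => by simpa [form_eq_dotProduct] using Fop_pow_Omega_dotProduct_of_ne hv hpq⟩
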